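/- arXiv:1807.00079 — 4 statements merged into one kernel-verified Lean document; each statement's English description precedes it below -/
import Mathlib

section
/- Let V(A,B,q) = ∫_{x ∈ [0,1]^n, x₁^{a₁}⋯xₙ^{aₙ} > q} x₁^{b₁}⋯xₙ^{bₙ} dx for positive reals a_i, nonnegative reals b_i, and q ∈ (0,1). If the numbers c_i = (b_i+1)/a_i are pairwise distinct, then V(A,B,q) = (1/∏ a_i) · ( 1/∏ c_i − Σ_{i=1}^n q^{c_i} / (c_i · ∏_{j≠i} (c_j − c_i)) ). -/
/-!
Integrate out the first coordinate. For fixed `y = (x₂, …, xₙ)` with `q < ∏ yⱼ ^ aⱼ`, the admissible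
`x₁` form the interval `((q / ∏ yⱼ ^ aⱼ) ^ (1 / a₁), 1]`, and integrating `x₁ ^ b₁` over it gives
`(y ^ B' - q ^ c₁ · y ^ (B' - c₁ A')) / (a₁ c₁)`. Both terms are integrals of the same kind in
`n - 1` variables, the second one with the numbers `cⱼ - c₁` in place of `cⱼ`, so induction on `n`
reduces the theorem to a partial-fraction recursion for the right-hand side.
-/

open MeasureTheory Finset

namespace Fin

theorem prod_univ_erase_zero {M : Type*} [CommMonoid M] {n : ℕ} (f : Fin (n + 1) → M) :
    ∏ j ∈ univ.erase 0, f j = ∏ j : Fin n, f j.succ := by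
  rw [univ_succ, erase_cons, prod_map]
  rfl

theorem prod_univ_erase_succ {M : Type*} [CommMonoid M] {n : ℕ} (f : Fin (n + 1) → M)
    (k : Fin n) : ∏ j ∈ univ.erase k.succ, f j = f 0 * ∏ j ∈ univ.erase k, f j.succ := by
  rw [univ_succ, erase_cons_of_ne _ (succ_ne_zero k).symm, Finset.prod_cons,
    show k.succ = (⟨succ, succ_injective n⟩ : Fin n ↪ Fin (n + 1)) k from rfl, ← map_erase,
    prod_map]
  rfl

end Fin

noncomputable def volumeFormula {n : ℕ} (c : Fin n → ℝ) (q : ℝ) : ℝ :=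
  1 / ∏ i, c i - ∑ i, q ^ c i / (c i * ∏ j ∈ univ.erase i, (c j - c i))

theorem volumeFormula_zero (c : Fin 0 → ℝ) (q : ℝ) : volumeFormula c q = 1 := by
  simp [volumeFormula]

theorem volumeFormula_succ {n : ℕ} {c : Fin (n + 1) → ℝ} (hc₀ : ∀ i, c i ≠ 0)
    (hc : Function.Injective c) {q : ℝ} (hq : 0 < q) :
    volumeFormula c q = (volumeFormula (fun j ↦ c j.succ) q
      - q ^ c 0 * volumeFormula (fun j ↦ c j.succ - c 0) q) / c 0 := by
  have hsucc : ∀ j : Fin n, c j.succ - c 0 ≠ 0 := fun j ↦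
    sub_ne_zero.2 fun h ↦ j.succ_ne_zero (hc h)
  have hP : ∀ j : Fin n, ∏ k ∈ univ.erase j, (c k.succ - c j.succ) ≠ 0 := fun j ↦
    prod_ne_zero_iff.2 fun k hk ↦ sub_ne_zero.2 fun h ↦
      (mem_erase.1 hk).1 (Fin.succ_injective n (hc h))
  -- partial fractions: `1 / (d - c₀) - 1 / d = c₀ / (d (d - c₀))`
  have hterm : ∀ j : Fin n,
      q ^ c j.succ / (c j.succ * ∏ k ∈ univ.erase j.succ, (c k - c j.succ))
      = (q ^ c j.succ / (c j.succ * ∏ k ∈ univ.erase j, (c k.succ - c j.succ))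
        - q ^ c 0 * (q ^ (c j.succ - c 0) /
            ((c j.succ - c 0) * ∏ k ∈ univ.erase j, (c k.succ - c j.succ)))) / c 0 := by
    intro j
    have hqq : q ^ c j.succ = q ^ c 0 * q ^ (c j.succ - c 0) := by
      rw [← Real.rpow_add hq, add_sub_cancel]
    have h0j : c 0 - c j.succ ≠ 0 := by rw [← neg_sub]; exact neg_ne_zero.2 (hsucc j)
    rw [Fin.prod_univ_erase_succ, hqq]
    field_simp [hc₀ 0, hc₀ j.succ, hsucc j, hP j, h0j]
    ring
  simp only [volumeFormula, sub_sub_sub_cancel_right]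
  rw [Fin.sum_univ_succ, Fin.prod_univ_succ, Fin.prod_univ_erase_zero,
    sum_congr rfl fun j _ ↦ hterm j, ← sum_div, sum_sub_distrib, ← mul_sum]
  generalize ∑ j : Fin n, q ^ c j.succ / (c j.succ * ∏ k ∈ univ.erase j, (c k.succ - c j.succ))
    = S₁
  generalize ∑ j : Fin n, q ^ (c j.succ - c 0) /
    ((c j.succ - c 0) * ∏ k ∈ univ.erase j, (c k.succ - c j.succ)) = S₂
  field_simp [hc₀ 0]
  ring

theorem MeasureTheory.integral_eq_integral_integral_cons {α E : Type*} [MeasureSpace α]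
    [SigmaFinite (volume : Measure α)] [NormedAddCommGroup E] [NormedSpace ℝ E] {n : ℕ}
    {f : (Fin (n + 1) → α) → E} (hf : Integrable f) :
    ∫ x, f x = ∫ y : Fin n → α, ∫ t : α, f (Fin.cons t y) := by
  have hmp := (volume_preserving_piFinSuccAbove (fun _ : Fin (n + 1) ↦ α) 0).symm
  have hcons : ∀ p : α × (Fin n → α),
      (MeasurableEquiv.piFinSuccAbove (fun _ ↦ α) 0).symm p = Fin.cons p.1 p.2 := fun p ↦ by
    simp [MeasurableEquiv.piFinSuccAbove_symm_apply, Fin.insertNthEquiv]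
  rw [← hmp.integral_comp', Measure.volume_eq_prod, integral_prod_symm]
  · simp only [hcons]
  · rw [← Measure.volume_eq_prod]
    exact (hmp.integrable_comp_emb (MeasurableEquiv.measurableEmbedding _)).2 hf

theorem integral_Ioc_rpow {r s b : ℝ} (hr : 0 < r) (hrs : r ≤ s) (hb : b ≠ -1) :
    ∫ t in Set.Ioc r s, t ^ b = (s ^ (b + 1) - r ^ (b + 1)) / (b + 1) := by
  rw [← intervalIntegral.integral_of_le hrs, integral_rpow (Or.inr ⟨hb, ?_⟩)]
  rw [Set.uIcc_of_le hrs]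
  exact fun h ↦ hr.not_ge h.1

theorem Real.div_prod_rpow_rpow_mul_prod_rpow {ι : Type*} {s : Finset ι} {q c : ℝ} (hq : 0 ≤ q)
    {y a b : ι → ℝ} (hy : ∀ j ∈ s, 0 < y j) :
    (q / ∏ j ∈ s, y j ^ a j) ^ c * ∏ j ∈ s, y j ^ b j = q ^ c * ∏ j ∈ s, y j ^ (b j - a j * c) := by
  have hP : 0 < ∏ j ∈ s, y j ^ a j := prod_pos fun j hj ↦ Real.rpow_pos_of_pos (hy j hj) _
  rw [Real.div_rpow hq hP.le,
    ← Real.finsetProd_rpow _ _ fun j hj ↦ (Real.rpow_pos_of_pos (hy j hj) _).le,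
    div_mul_eq_mul_div, mul_div_assoc, ← prod_div_distrib]
  refine congrArg (q ^ c * ·) (prod_congr rfl fun j hj ↦ ?_)
  rw [← Real.rpow_mul (hy j hj).le, Real.rpow_sub (hy j hj)]

def monomialSuperlevelSet {n : ℕ} (a : Fin n → ℝ) (q : ℝ) : Set (Fin n → ℝ) :=
  {x | (∀ i, x i ∈ Set.Icc (0 : ℝ) 1) ∧ q < ∏ i, x i ^ a i}

namespace monomialSuperlevelSet

variable {n : ℕ} {a : Fin n → ℝ} {q : ℝ}

theorem lt_rpow (ha : ∀ i, 0 ≤ a i) {x : Fin n → ℝ} (hx : x ∈ monomialSuperlevelSet a q)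
    (i : Fin n) : q < x i ^ a i := by
  obtain ⟨hx01, hq⟩ := hx
  refine hq.trans_le ?_
  rw [← mul_prod_erase univ _ (mem_univ i)]
  exact mul_le_of_le_one_right (Real.rpow_nonneg (hx01 i).1 _) <|
    prod_le_one (fun j _ ↦ Real.rpow_nonneg (hx01 j).1 _)
      fun j _ ↦ Real.rpow_le_one (hx01 j).1 (hx01 j).2 (ha j)

theorem rpow_inv_lt (ha : ∀ i, 0 < a i) (hq : 0 ≤ q) {x : Fin n → ℝ}
    (hx : x ∈ monomialSuperlevelSet a q) (i : Fin n) : q ^ (a i)⁻¹ < x i := by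
  have h := Real.rpow_lt_rpow hq (lt_rpow (fun j ↦ (ha j).le) hx i) (inv_pos.2 (ha i))
  rwa [Real.rpow_rpow_inv (hx.1 i).1 (ha i).ne'] at h

theorem pos (ha : ∀ i, 0 < a i) (hq : 0 < q) {x : Fin n → ℝ}
    (hx : x ∈ monomialSuperlevelSet a q) (i : Fin n) : 0 < x i :=
  (Real.rpow_pos_of_pos hq _).trans (rpow_inv_lt ha hq.le hx i)

theorem measurableSet (a : Fin n → ℝ) (q : ℝ) : MeasurableSet (monomialSuperlevelSet a q) := by
  rw [monomialSuperlevelSet, Set.ofPred_and, Set.ofPred_forall]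
  exact (MeasurableSet.iInter fun i ↦ measurableSet_Icc.preimage (measurable_pi_apply i)).inter <|
    measurableSet_lt measurable_const <|
      Finset.measurable_prod _ fun i _ ↦ (measurable_pi_apply i).pow_const _

theorem subset_pi_Icc (a : Fin n → ℝ) (q : ℝ) :
    monomialSuperlevelSet a q ⊆ Set.univ.pi fun _ ↦ Set.Icc 0 1 :=
  fun _ hx ↦ Set.mem_univ_pi.2 hx.1

theorem integrableOn_prod_rpow (ha : ∀ i, 0 < a i) (hq : 0 < q) (b : Fin n → ℝ) :
    IntegrableOn (fun x : Fin n → ℝ ↦ ∏ i, x i ^ b i) (monomialSuperlevelSet a q) := by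
  have hfin : volume (monomialSuperlevelSet a q) ≠ ⊤ := by
    refine ne_top_of_le_ne_top ?_ (measure_mono (subset_pi_Icc a q))
    rw [volume_pi_pi]
    simp [Real.volume_Icc]
  refine Measure.integrableOn_of_bounded hfin
    (Finset.measurable_prod _ fun i _ ↦
      (measurable_pi_apply i).pow_const _).aestronglyMeasurable
    (M := ∏ i, max 1 ((q ^ (a i)⁻¹) ^ b i)) ?_
  filter_upwards [ae_restrict_mem (measurableSet a q)] with x hx
  have hxpos := pos ha hq hx
  rw [Real.norm_of_nonneg (prod_nonneg fun i _ ↦ Real.rpow_nonneg (hxpos i).le _)]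
  refine prod_le_prod (fun i _ ↦ Real.rpow_nonneg (hxpos i).le _) fun i _ ↦ ?_
  rcases le_or_gt 0 (b i) with hb | hb
  · exact le_max_of_le_left (Real.rpow_le_one (hxpos i).le (hx.1 i).2 hb)
  · exact le_max_of_le_right <| Real.rpow_le_rpow_of_nonpos (Real.rpow_pos_of_pos hq _)
      (rpow_inv_lt ha hq.le hx i).le hb.le

theorem cons_mem_iff {a : Fin (n + 1) → ℝ} (ha : 0 < a 0) (hq : 0 < q) {t : ℝ}
    {y : Fin n → ℝ} :
    Fin.cons t y ∈ monomialSuperlevelSet a q ↔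
      y ∈ monomialSuperlevelSet (Fin.tail a) q ∧
        t ∈ Set.Ioc ((q / ∏ j, y j ^ Fin.tail a j) ^ (a 0)⁻¹) 1 := by
  simp only [monomialSuperlevelSet, Set.mem_ofPred_eq, Fin.forall_fin_succ, Fin.prod_univ_succ,
    Fin.cons_zero, Fin.cons_succ, Fin.tail, Set.mem_Ioc]
  set P := ∏ j, y j ^ a j.succ
  constructor
  · rintro ⟨⟨⟨ht0, ht1⟩, hy⟩, hlt⟩
    have hP0 : 0 ≤ P := prod_nonneg fun j _ ↦ Real.rpow_nonneg (hy j).1 _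
    have hqP : q < P := hlt.trans_le (mul_le_of_le_one_left hP0 (Real.rpow_le_one ht0 ht1 ha.le))
    have hP : 0 < P := hq.trans hqP
    exact ⟨⟨hy, hqP⟩, (Real.rpow_inv_lt_iff_of_pos (div_nonneg hq.le hP.le) ht0 ha).2
      ((div_lt_iff₀ hP).2 hlt), ht1⟩
  · rintro ⟨⟨hy, hqP⟩, hrt, ht1⟩
    have hP : 0 < P := hq.trans hqP
    have ht0 : 0 ≤ t := ((Real.rpow_pos_of_pos (div_pos hq hP) _).trans hrt).le
    exact ⟨⟨⟨ht0, ht1⟩, hy⟩, (div_lt_iff₀ hP).1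
      ((Real.rpow_inv_lt_iff_of_pos (div_nonneg hq.le hP.le) ht0 ha).1 hrt)⟩

theorem integral_cons_indicator {a b : Fin (n + 1) → ℝ} {c₀ : ℝ} (ha : ∀ i, 0 < a i)
    (hb : b 0 + 1 = a 0 * c₀) (hc₀ : c₀ ≠ 0) (hq : 0 < q) (y : Fin n → ℝ) :
    ∫ t, (monomialSuperlevelSet a q).indicator (fun x ↦ ∏ i, x i ^ b i) (Fin.cons t y)
      = (monomialSuperlevelSet (Fin.tail a) q).indicator
          (fun y ↦ (∏ j, y j ^ Fin.tail b j
            - q ^ c₀ * ∏ j, y j ^ (Fin.tail b j - Fin.tail a j * c₀)) / (a 0 * c₀)) y := by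
  by_cases hy : y ∈ monomialSuperlevelSet (Fin.tail a) q
  · have hypos := pos (fun j ↦ ha j.succ) hq hy
    have hP : 0 < q / ∏ j, y j ^ Fin.tail a j := div_pos hq (hq.trans hy.2)
    set r := (q / ∏ j, y j ^ Fin.tail a j) ^ (a 0)⁻¹
    have hr : 0 < r := Real.rpow_pos_of_pos hP _
    have hr1 : r ≤ 1 := Real.rpow_le_one hP.le ((div_lt_one (hq.trans hy.2)).2 hy.2).le
      (inv_nonneg.2 (ha 0).le)
    have hslice : ∀ t, (monomialSuperlevelSet a q).indicator (fun x ↦ ∏ i, x i ^ b i)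
        (Fin.cons t y) = (Set.Ioc r 1).indicator (fun t ↦ t ^ b 0 * ∏ j, y j ^ Fin.tail b j) t := by
      intro t
      classical
      rw [Set.indicator_apply, Set.indicator_apply, cons_mem_iff (ha 0) hq, and_iff_right hy]
      simp only [Fin.prod_univ_succ, Fin.cons_zero, Fin.cons_succ, Fin.tail]
      rfl
    have hrpow : r ^ (b 0 + 1) = (q / ∏ j, y j ^ Fin.tail a j) ^ c₀ := by
      rw [hb, ← Real.rpow_mul hP.le, inv_mul_cancel_left₀ (ha 0).ne']
    simp_rw [hslice]
    rw [integral_indicator measurableSet_Ioc, integral_mul_const,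
      integral_Ioc_rpow hr hr1 fun h ↦ mul_ne_zero (ha 0).ne' hc₀ (by rw [← hb, h]; norm_num),
      Set.indicator_of_mem hy, Real.one_rpow, div_mul_eq_mul_div, sub_mul, one_mul, hrpow,
      Real.div_prod_rpow_rpow_mul_prod_rpow hq.le fun j _ ↦ hypos j, hb]
  · have hnot : ∀ t, Fin.cons t y ∉ monomialSuperlevelSet a q := fun t h ↦
      hy ((cons_mem_iff (ha 0) hq).1 h).1
    simp [Set.indicator_of_notMem, hnot, hy]

end monomialSuperlevelSet

open monomialSuperlevelSet in
theorem integral_prod_rpow_monomialSuperlevelSet {n : ℕ} {a b c : Fin n → ℝ}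
    (ha : ∀ i, 0 < a i) (hc : ∀ i, c i = (b i + 1) / a i) (hc₀ : ∀ i, c i ≠ 0)
    (hinj : Function.Injective c) {q : ℝ} (hq : q ∈ Set.Ioo 0 1) :
    ∫ x in monomialSuperlevelSet a q, ∏ i, x i ^ b i = volumeFormula c q / ∏ i, a i := by
  induction n with
  | zero =>
    have huniv : monomialSuperlevelSet a q = Set.univ := by
      simp [monomialSuperlevelSet, hq.2]
    simp [huniv, volumeFormula_zero, measureReal_def, volume_pi]
  | succ n ih =>
    have hb : ∀ i, b i + 1 = a i * c i := fun i ↦ by rw [hc i, mul_div_cancel₀ _ (ha i).ne']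
    set S := monomialSuperlevelSet (Fin.tail a) q
    have hint : ∀ b' : Fin n → ℝ, IntegrableOn (fun y ↦ ∏ j, y j ^ b' j) S := fun b' ↦
      integrableOn_prod_rpow (fun j ↦ ha j.succ) hq.1 b'
    have ih₁ := ih (a := Fin.tail a) (fun j ↦ ha j.succ) (fun j ↦ hc j.succ) (fun j ↦ hc₀ j.succ)
      (hinj.comp (Fin.succ_injective n))
    have ih₂ := ih (a := Fin.tail a) (b := fun j ↦ b j.succ - a j.succ * c 0)
      (c := fun j ↦ c j.succ - c 0) (fun j ↦ ha j.succ)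
      (fun j ↦ (eq_div_iff (ha j.succ).ne').2 (by linear_combination -hb j.succ))
      (fun j ↦ sub_ne_zero.2 fun h ↦ j.succ_ne_zero (hinj h))
      (fun i j h ↦ hinj.comp (Fin.succ_injective n) (sub_left_injective h))
    calc ∫ x in monomialSuperlevelSet a q, ∏ i, x i ^ b i
        = ∫ y, ∫ t, (monomialSuperlevelSet a q).indicator (fun x ↦ ∏ i, x i ^ b i)
            (Fin.cons t y) := by
          rw [← integral_indicator (measurableSet a q), integral_eq_integral_integral_cons
            ((integrableOn_prod_rpow ha hq.1 b).integrable_indicator (measurableSet a q))]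
      _ = ∫ y in S, (∏ j, y j ^ Fin.tail b j
            - q ^ c 0 * ∏ j, y j ^ (Fin.tail b j - Fin.tail a j * c 0)) / (a 0 * c 0) := by
          simp_rw [integral_cons_indicator ha (hb 0) (hc₀ 0) hq.1]
          rw [integral_indicator (measurableSet _ _)]
      _ = ((∫ y in S, ∏ j, y j ^ b j.succ)
            - q ^ c 0 * ∫ y in S, ∏ j, y j ^ (b j.succ - a j.succ * c 0)) / (a 0 * c 0) := by
          rw [integral_div, integral_sub (hint _) ((hint _).const_mul _), integral_const_mul]
          rfl
      _ = volumeFormula c q / ∏ i, a i := by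
          rw [ih₁, ih₂, volumeFormula_succ hc₀ hinj hq.1, Fin.prod_univ_succ]
          field_simp [(ha 0).ne', hc₀ 0]
          rfl

/-- Lemma `VolumeComputation`, case (2): explicit formula for
`V(A,B,q) = ∫_{x ∈ [0,1]^n, x^A > q} x^B dx` when the `c i = (b i + 1)/(a i)`
are pairwise distinct. -/
theorem stmt0 (n : ℕ) (a b c : Fin n → ℝ)
    (ha : ∀ i, 0 < a i) (hb : ∀ i, 0 ≤ b i)
    (hc : ∀ i, c i = (b i + 1) / a i)
    (hdist : Function.Injective c)
    (q : ℝ) (hq : q ∈ Set.Ioo (0 : ℝ) 1) :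
    ∫ x in {x : Fin n → ℝ | (∀ i, x i ∈ Set.Icc (0:ℝ) 1) ∧ q < ∏ i, x i ^ a i},
      ∏ i, x i ^ b i
    = (1 / ∏ i, a i) *
      (1 / ∏ i, c i -
        ∑ i, q ^ c i / (c i * ∏ j ∈ univ.erase i, (c j - c i))) := by
  have hc₀ : ∀ i, c i ≠ 0 := fun i ↦ by
    rw [hc i]
    exact (div_pos (by linarith [hb i]) (ha i)).ne'
  rw [one_div_mul_eq_div]
  exact integral_prod_rpow_monomialSuperlevelSet ha hc hc₀ hdist hq
end

section
/- Sylvester's identity: for pairwise distinct nonzero real numbers c₁,…,cₙ, one has Σ_{i=1}^{n} ∏_{j≠i} c_j/(c_j − c_i) = 1. -/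
open Finset

/-- Sylvester's identity: for pairwise distinct nonzero reals `c₁,…,cₙ`,
`∑ i, ∏_{j ≠ i} c j / (c j - c i) = 1`. -/
theorem stmt2 (n : ℕ) (hn : 0 < n) (c : Fin n → ℝ)
    (hc0 : ∀ i, c i ≠ 0) (hdist : Function.Injective c) :
    ∑ i, ∏ j ∈ univ.erase i, c j / (c j - c i) = 1 := by
  have hne : (univ : Finset (Fin n)).Nonempty := univ_nonempty_iff.mpr (Fin.pos_iff_nonempty.mp hn)
  have h := Lagrange.sum_basis (s := univ) (v := c) hdist.injOn hne
  have h0 := congrArg (Polynomial.eval 0) h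
  rw [Polynomial.eval_finset_sum, Polynomial.eval_one] at h0
  rw [← h0]
  refine Finset.sum_congr rfl fun i _ => ?_
  rw [Lagrange.basis, Polynomial.eval_prod]
  refine Finset.prod_congr rfl fun j hj => ?_
  have hij : c j ≠ c i := fun h => (mem_erase.mp hj).1 (hdist h)
  simp only [Lagrange.basisDivisor, Polynomial.eval_mul, Polynomial.eval_C, Polynomial.eval_sub,
    Polynomial.eval_X]
  rw [div_eq_mul_inv, ← neg_sub (c j) (c i), inv_neg]
  ring
end

section
/- Sylvester's identity for complete homogeneous symmetric polynomials: for pairwise distinct real numbers x₁,…,xₙ and any integer d ≥ n−1, h_{d−n+1}(x₁,…,xₙ) = Σ_{r=1}^{n} x_r^d · ∏_{j≠r} 1/(x_r − x_j), where h_k denotes the complete homogeneous symmetric polynomial of degree k. -/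
/-!
Write `D(S)` for the right-hand side taken over a set `S` of nodes; it is the divided difference
of `t ↦ t ^ d` at `S`. It obeys the divided-difference recursion
`D(S ∖ {a}) - D(S ∖ {b}) = (a - b) * D(S)`, and complete homogeneous polynomials obey the same
recursion `h_{k+1}(a, L) - h_{k+1}(b, L) = (a - b) * h_k(a, b, L)`. Since `D({a}) = a ^ d = h_d(a)`,
induction on the number of nodes gives `D(S) = h_{d+1-|S|}(S)`.
-/

open Finset

/-- The complete homogeneous symmetric polynomial of degree `k` in `n` real
variables: the sum of all monomials of total degree `k` (with `h_0 = 1`). -/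
def completeHomogeneous (n k : ℕ) (x : Fin n → ℝ) : ℝ :=
  ∑ d ∈ (Fintype.piFinset fun _ : Fin n => Finset.range (k+1)).filter
      (fun d => ∑ i, d i = k),
    ∏ i, x i ^ d i

open Lagrange

theorem Finset.Nat.sum_antidiagonalTuple_succ {M : Type*} [AddCommMonoid M] (k n : ℕ)
    (f : (Fin (k + 1) → ℕ) → M) :
    ∑ t ∈ antidiagonalTuple (k + 1) n, f t
      = ∑ p ∈ antidiagonal n, ∑ t ∈ antidiagonalTuple k p.2, f (Fin.cons p.1 t) := by
  simp only [Finset.sum, antidiagonalTuple, Multiset.Nat.antidiagonalTuple,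
    List.Nat.antidiagonalTuple, Multiset.map_coe, Multiset.sum_coe, List.flatMap,
    List.map_flatten, List.sum_flatten, List.map_map, Function.comp_def]
  rfl

theorem completeHomogeneous_eq_sum_antidiagonalTuple (n k : ℕ) (x : Fin n → ℝ) :
    completeHomogeneous n k x = ∑ t ∈ Nat.antidiagonalTuple n k, ∏ i, x i ^ t i := by
  refine sum_congr (ext fun t => ?_) fun _ _ => rfl
  simp only [mem_filter, Fintype.mem_piFinset, mem_range, Nat.mem_antidiagonalTuple]
  refine ⟨And.right, fun h => ⟨fun i => ?_, h⟩⟩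
  exact h ▸ Nat.lt_succ_of_le (single_le_sum (fun _ _ => Nat.zero_le _) (mem_univ i))

theorem completeHomogeneous_succ (n k : ℕ) (x : Fin (n + 1) → ℝ) :
    completeHomogeneous (n + 1) k x
      = ∑ p ∈ antidiagonal k, x 0 ^ p.1 * completeHomogeneous n p.2 (Fin.tail x) := by
  simp only [completeHomogeneous_eq_sum_antidiagonalTuple, Nat.sum_antidiagonalTuple_succ,
    Fin.prod_univ_succ, Fin.cons_zero, Fin.cons_succ, mul_sum]
  rfl

namespace List

variable {R : Type*}

def hsymm [CommSemiring R] : List R → ℕ → R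
  | [], k => if k = 0 then 1 else 0
  | a :: l, k => ∑ p ∈ antidiagonal k, a ^ p.1 * hsymm l p.2

section CommSemiring

variable [CommSemiring R]

@[simp]
theorem hsymm_zero (l : List R) : l.hsymm 0 = 1 := by
  induction l with
  | nil => rfl
  | cons a l ih => simp [hsymm, ih]

theorem hsymm_cons_succ (a : R) (l : List R) (k : ℕ) :
    (a :: l).hsymm (k + 1) = l.hsymm (k + 1) + a * (a :: l).hsymm k := by
  simp only [hsymm, Nat.sum_antidiagonal_succ, pow_zero, one_mul, mul_sum, pow_succ]
  congr 1
  exact sum_congr rfl fun _ _ => by ring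

theorem hsymm_singleton (a : R) (k : ℕ) : [a].hsymm k = a ^ k := by
  induction k with
  | zero => simp
  | succ k ih => rw [hsymm_cons_succ, ih]; simp [hsymm, pow_succ, mul_comm]

end CommSemiring

theorem hsymm_cons_sub_hsymm_cons [CommRing R] (a b : R) (l : List R) (k : ℕ) :
    (a :: l).hsymm (k + 1) - (b :: l).hsymm (k + 1) = (a - b) * (a :: b :: l).hsymm k := by
  induction k with
  | zero => simp [hsymm_cons_succ]
  | succ k ih =>
    rw [hsymm_cons_succ a, hsymm_cons_succ b, hsymm_cons_succ a (b :: l)]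
    linear_combination a * ih

end List

theorem completeHomogeneous_eq_hsymm_ofFn (n k : ℕ) (x : Fin n → ℝ) :
    completeHomogeneous n k x = (List.ofFn x).hsymm k := by
  induction n generalizing k with
  | zero => cases k <;> simp [completeHomogeneous_eq_sum_antidiagonalTuple, List.hsymm]
  | succ n ih => simp only [completeHomogeneous_succ, ih, List.ofFn_succ, List.hsymm]; rfl

section DividedDifference

variable {F ι : Type*} [Field F] [DecidableEq ι] {s : Finset ι} {v : ι → F} {a b : ι}

def dividedDifference (s : Finset ι) (v r : ι → F) : F :=
  ∑ i ∈ s, nodalWeight s v i * r i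

theorem dividedDifference_singleton (r : ι → F) : dividedDifference {a} v r = r a := by
  simp [dividedDifference, nodalWeight]

theorem Lagrange.nodalWeight_insert_self (ha : a ∉ s) :
    nodalWeight (insert a s) v a = ∏ j ∈ s, (v a - v j)⁻¹ := by
  rw [nodalWeight, erase_insert ha]

theorem Lagrange.nodalWeight_insert_of_mem {i : ι} (ha : a ∉ s) (hi : i ∈ s) :
    nodalWeight (insert a s) v i = (v i - v a)⁻¹ * nodalWeight s v i := by
  rw [nodalWeight, erase_insert_of_ne (ne_of_mem_of_not_mem hi ha).symm,
    prod_insert fun h => ha (mem_of_mem_erase h), nodalWeight]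

theorem dividedDifference_insert (ha : a ∉ s) (r : ι → F) :
    dividedDifference (insert a s) v r
      = (∏ j ∈ s, (v a - v j)⁻¹) * r a
        + dividedDifference s v (fun i => (v i - v a)⁻¹ * r i) := by
  rw [dividedDifference, sum_insert ha, nodalWeight_insert_self ha, dividedDifference]
  congr 1
  refine sum_congr rfl fun i hi => ?_
  rw [nodalWeight_insert_of_mem ha hi]
  ring

theorem dividedDifference_insert_sub_insert {u : Finset ι} (hab : v a ≠ v b)
    (hua : ∀ i ∈ u, v i ≠ v a) (hub : ∀ i ∈ u, v i ≠ v b) (r : ι → F) :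
    dividedDifference (insert a u) v r - dividedDifference (insert b u) v r
      = (v a - v b) * dividedDifference (insert a (insert b u)) v r := by
  have hau : a ∉ u := fun h => hua a h rfl
  have hbu : b ∉ u := fun h => hub b h rfl
  have habu : a ∉ insert b u := by
    simpa [hau] using fun h => hab (congrArg v h)
  have hsum : dividedDifference u v (fun i => (v i - v a)⁻¹ * r i)
        - dividedDifference u v (fun i => (v i - v b)⁻¹ * r i)
      = (v a - v b)
        * dividedDifference u v (fun i => (v i - v b)⁻¹ * ((v i - v a)⁻¹ * r i)) := by
    simp only [dividedDifference, mul_sum, ← sum_sub_distrib]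
    refine sum_congr rfl fun i hi => ?_
    have := sub_ne_zero.mpr (hua i hi)
    have := sub_ne_zero.mpr (hub i hi)
    field_simp
    ring
  rw [dividedDifference_insert hau, dividedDifference_insert hbu, dividedDifference_insert habu,
    dividedDifference_insert hbu, prod_insert hbu]
  have e₁ : (v a - v b) * (v a - v b)⁻¹ = 1 := mul_inv_cancel₀ (sub_ne_zero.mpr hab)
  have e₂ : (v a - v b) * (v b - v a)⁻¹ = -1 := by
    rw [← neg_sub, neg_mul, mul_inv_cancel₀ (sub_ne_zero.mpr hab.symm)]
  linear_combination hsum - (∏ j ∈ u, (v a - v j)⁻¹) * r a * e₁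
    - (∏ j ∈ u, (v b - v j)⁻¹) * r b * e₂

theorem hsymm_map_cons_eq_dividedDifference_pow {d : ℕ} (a : ι) (l : List ι)
    (hl : ((a :: l).map v).Nodup) (hd : (a :: l).length ≤ d + 1) :
    ((a :: l).map v).hsymm (d + 1 - (a :: l).length)
      = dividedDifference (a :: l).toFinset v (v · ^ d) := by
  induction l generalizing a with
  | nil => simp [List.hsymm_singleton, dividedDifference_singleton]
  | cons b l ih =>
    simp only [List.map_cons, List.nodup_cons, List.mem_cons, List.mem_map, not_or, not_exists,
      not_and] at hl
    obtain ⟨⟨hab, hla⟩, hlb, hl⟩ := hl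
    simp only [List.length_cons] at hd
    have iha := ih a (by simp_all) (by simp; omega)
    have ihb := ih b (by simp_all) (by simp; omega)
    have hk : d + 1 - (l.length + 1) = d + 1 - (l.length + 2) + 1 := by omega
    refine mul_left_cancel₀ (sub_ne_zero.mpr hab) ?_
    simp only [List.toFinset_cons, List.length_cons, List.map_cons] at iha ihb ⊢
    rw [← dividedDifference_insert_sub_insert hab (by simpa using hla) (by simpa using hlb),
      ← iha, ← ihb, hk, List.hsymm_cons_sub_hsymm_cons]

theorem hsymm_map_eq_dividedDifference_pow {d : ℕ} {l : List ι} (hl : (l.map v).Nodup)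
    (hd : l.length ≤ d + 1) :
    (l.map v).hsymm (d + 1 - l.length) = dividedDifference l.toFinset v (v · ^ d) := by
  cases l with
  | nil => simp [List.hsymm, dividedDifference]
  | cons a l => exact hsymm_map_cons_eq_dividedDifference_pow a l hl hd

end DividedDifference

theorem stmt3_general (n : ℕ) (x : Fin n → ℝ) (hx : Function.Injective x)
    (d : ℕ) (hd : n - 1 ≤ d) :
    completeHomogeneous n (d + 1 - n) x
      = ∑ r, x r ^ d * ∏ j ∈ univ.erase r, 1 / (x r - x j) := by
  have h := hsymm_map_eq_dividedDifference_pow (l := List.finRange n) (v := x) (d := d)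
    (by rw [← List.ofFn_eq_map]; exact List.nodup_ofFn.mpr hx) (by simp; omega)
  rw [List.length_finRange, ← List.ofFn_eq_map, List.toFinset_finRange] at h
  rw [completeHomogeneous_eq_hsymm_ofFn, h, dividedDifference]
  simp only [nodalWeight, one_div, mul_comm]

/-- Sylvester's identity for complete homogeneous symmetric polynomials:
for pairwise distinct reals `x₁,…,xₙ` and `d ≥ n - 1`,
`h_{d-n+1}(x) = ∑ r, x r ^ d * ∏_{j ≠ r} 1/(x r - x j)`. -/
theorem stmt3 (n : ℕ) (hn : 0 < n) (x : Fin n → ℝ) (hx : Function.Injective x)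
    (d : ℕ) (hd : n - 1 ≤ d) :
    completeHomogeneous n (d + 1 - n) x
      = ∑ r, x r ^ d * ∏ j ∈ univ.erase r, 1 / (x r - x j) :=
  stmt3_general n x hx d hd
end

section
/- If f : ℝⁿ → ℝ is continuous, compactly supported, and nonnegative, then there exists a sequence of continuous, compactly supported, nonnegative semialgebraic functions fₖ : ℝⁿ → ℝ with fₖ ≤ f pointwise and fₖ → f uniformly. -/
/-- A set `s ⊆ ℝⁿ` is semialgebraic if it is a finite union of finite
intersections of sets defined by polynomial equalities and strict
inequalities. (Since `p < 0` is `0 < -p`, relations `=` and `>` suffice.) -/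
def IsSemialgebraic {n : ℕ} (s : Set (Fin n → ℝ)) : Prop :=
  ∃ (N M : ℕ) (p : Fin N → Fin M → MvPolynomial (Fin n) ℝ)
    (e : Fin N → Fin M → Bool),
    s = ⋃ i, ⋂ j, {x | if e i j then MvPolynomial.eval x (p i j) = 0
                       else 0 < MvPolynomial.eval x (p i j)}

/-- A function `g : ℝⁿ → ℝ` is semialgebraic if its graph is a semialgebraic
subset of `ℝ^{n+1}`. -/
def IsSemialgebraicFun {n : ℕ} (g : (Fin n → ℝ) → ℝ) : Prop :=
  IsSemialgebraic {z : Fin (n+1) → ℝ | g (Fin.init z) = z (Fin.last n)}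


open MvPolynomial in
lemma isSemialgebraicFun_sup' {n m : ℕ} (q : Fin (m+1) → MvPolynomial (Fin n) ℝ) :
    IsSemialgebraicFun (fun x => Finset.univ.sup' Finset.univ_nonempty
      (fun i => MvPolynomial.eval x (q i))) := by
  classical
  set Q : Fin (m+1) → MvPolynomial (Fin (n+1)) ℝ :=
    fun j => rename Fin.castSucc (q j) - X (Fin.last n) with hQ
  have evalQ : ∀ (z : Fin (n+1) → ℝ) j,
      eval z (Q j) = eval (Fin.init z) (q j) - z (Fin.last n) := by
    intro z j
    have : Fin.init z = z ∘ Fin.castSucc := rfl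
    simp [hQ, eval_rename, this]
  set ι := Fin (m+1) × (Fin (m+1) → Bool)
  set E : Fin (Fintype.card ι) ≃ ι := (Fintype.equivFin ι).symm with hE
  set F : ι → Fin (m+2) → MvPolynomial (Fin (n+1)) ℝ :=
    fun a => Fin.cases (Q a.1) (fun j => if a.2 j then Q j else -Q j) with hF
  set b : ι → Fin (m+2) → Bool := fun a => Fin.cases true a.2 with hb
  refine ⟨Fintype.card ι, m+2, fun i => F (E i), fun i => b (E i), ?_⟩
  rw [Function.Surjective.iUnion_comp E.surjective
    (g := fun a => ⋂ j, {x | if b a j then MvPolynomial.eval x (F a j) = 0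
                       else 0 < MvPolynomial.eval x (F a j)})]
  ext z
  simp only [Set.mem_setOf_eq, Set.mem_iUnion, Set.mem_iInter]
  constructor
  · intro h
    obtain ⟨i, -, hi⟩ := Finset.exists_mem_eq_sup' (Finset.univ_nonempty)
      (fun i => MvPolynomial.eval (Fin.init z) (q i))
    refine ⟨(i, fun j => decide (eval z (Q j) = 0)), ?_⟩
    have hub : ∀ j, eval z (Q j) ≤ 0 := by
      intro j
      rw [evalQ, ← h]
      simp only [sub_nonpos]
      exact Finset.le_sup' (fun i => MvPolynomial.eval (Fin.init z) (q i))
        (Finset.mem_univ j)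
    intro j
    induction j using Fin.cases with
    | zero =>
        simp only [hF, hb, Fin.cases_zero, if_true, Set.mem_setOf_eq]
        rw [evalQ, ← h, hi]
        ring
    | succ j' =>
        simp only [hF, hb, Fin.cases_succ, Set.mem_setOf_eq]
        split_ifs with hdec
        · exact of_decide_eq_true hdec
        · have hne : ¬(eval z (Q j') = 0) := fun hh => hdec (decide_eq_true hh)
          rw [eval_neg]
          have := lt_of_le_of_ne (hub j') hne
          linarith
  · rintro ⟨a, ha⟩
    have h0 := ha 0
    simp only [hF, hb, Fin.cases_zero, if_true, Set.mem_setOf_eq] at h0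
    have hub : ∀ j, eval (Fin.init z) (q j) ≤ z (Fin.last n) := by
      intro j
      have hj := ha j.succ
      simp only [hF, hb, Fin.cases_succ, Set.mem_setOf_eq] at hj
      rcases Bool.eq_false_or_eq_true (a.2 j) with h | h <;> rw [h] at hj <;>
        simp only [Bool.false_eq_true, if_false, if_true, eval_neg, evalQ] at hj <;>
        linarith
    refine le_antisymm (Finset.sup'_le _ _ fun j _ => hub j) ?_
    have : eval (Fin.init z) (q a.1) = z (Fin.last n) := by
      have := h0; rw [evalQ] at this; linarith
    rw [← this]
    exact Finset.le_sup' (fun i => MvPolynomial.eval (Fin.init z) (q i))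
      (Finset.mem_univ a.1)
open MvPolynomial in
lemma approx_lemma (n : ℕ) (f : (Fin n → ℝ) → ℝ) (hf : Continuous f)
    (hfc : HasCompactSupport f) (hfnn : ∀ x, 0 ≤ f x) {ε : ℝ} (hε : 0 < ε) :
    ∃ g : (Fin n → ℝ) → ℝ, Continuous g ∧ HasCompactSupport g ∧ (∀ x, 0 ≤ g x) ∧
      IsSemialgebraicFun g ∧ (∀ x, g x ≤ f x) ∧ ∀ x, f x ≤ g x + 3 * ε := by
  classical
  have uc : UniformContinuous f :=
    hf.uniformContinuous_of_tendsto_cocompact hfc.is_zero_at_infty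
  obtain ⟨δ, hδ, hδf⟩ := Metric.uniformContinuous_iff.mp uc ε hε
  obtain ⟨C, hC⟩ := hf.bounded_above_of_compact_support hfc
  set C' : ℝ := max C 0 with hC'
  have hC'0 : 0 ≤ C' := le_max_right _ _
  have hfC' : ∀ x, f x ≤ C' := fun x =>
    le_trans (le_trans (le_abs_self _)
      (by simpa [Real.norm_eq_abs] using hC x)) (le_max_left _ _)
  have hpos : 0 < (n : ℝ) * C' + 1 := by
    have : 0 ≤ (n : ℝ) * C' := mul_nonneg (Nat.cast_nonneg n) hC'0
    linarith
  set η : ℝ := min δ (δ * Real.sqrt (ε / ((n : ℝ) * C' + 1))) with hηdef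
  have hη0 : 0 < η :=
    lt_min hδ (mul_pos hδ (Real.sqrt_pos.mpr (div_pos hε hpos)))
  have hηδ : η ≤ δ := min_le_left _ _
  have hη2 : η ^ 2 ≤ δ ^ 2 * (ε / ((n : ℝ) * C' + 1)) := by
    have h1 : η ≤ δ * Real.sqrt (ε / ((n : ℝ) * C' + 1)) := min_le_right _ _
    calc η ^ 2 ≤ (δ * Real.sqrt (ε / ((n : ℝ) * C' + 1))) ^ 2 :=
          pow_le_pow_left₀ hη0.le h1 2
      _ = δ ^ 2 * (ε / ((n : ℝ) * C' + 1)) := by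
          rw [mul_pow, Real.sq_sqrt (le_of_lt (div_pos hε hpos))]
  -- finite net of the support
  have hKc : IsCompact (tsupport f) := hfc
  obtain ⟨t, htK, htfin, htcov⟩ :=
    hKc.elim_finite_subcover_image
      (fun (y : Fin n → ℝ) (_ : y ∈ tsupport f) => Metric.isOpen_ball)
      (fun x hx => Set.mem_biUnion hx (Metric.mem_ball_self hη0))
  set m := htfin.toFinset.card with hm
  set y : Fin m → (Fin n → ℝ) := fun i => (htfin.toFinset.equivFin.symm i : _) with hy
  have net : ∀ x ∈ tsupport f, ∃ i, dist x (y i) < η := by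
    intro x hx
    have hx2 := htcov hx
    simp only [Set.mem_iUnion] at hx2
    obtain ⟨y', hy', hxy'⟩ := hx2
    refine ⟨htfin.toFinset.equivFin ⟨y', htfin.mem_toFinset.mpr hy'⟩, ?_⟩
    have : y (htfin.toFinset.equivFin ⟨y', htfin.mem_toFinset.mpr hy'⟩) = y' := by
      simp [hy]
    rw [this]
    exact Metric.mem_ball.mp hxy'
  set c : Fin m → ℝ := fun i => max 0 (f (y i) - ε) with hc
  have hc0 : ∀ i, 0 ≤ c i := fun i => le_max_left _ _
  have hcC' : ∀ i, c i ≤ C' := fun i =>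
    max_le hC'0 (by have := hfC' (y i); linarith)
  set q : Fin (m+1) → MvPolynomial (Fin n) ℝ :=
    Fin.cases 0 (fun i => MvPolynomial.C (c i) *
      (1 - MvPolynomial.C ((δ^2)⁻¹) *
        ∑ j, (MvPolynomial.X j - MvPolynomial.C (y i j))^2)) with hq
  set g : (Fin n → ℝ) → ℝ :=
    fun x => Finset.univ.sup' Finset.univ_nonempty (fun i => eval x (q i)) with hg
  have e0 : ∀ x : Fin n → ℝ, eval x (q 0) = 0 := by intro x; simp [hq]
  have eS : ∀ (x : Fin n → ℝ) (i : Fin m), eval x (q i.succ) =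
      c i * (1 - (δ^2)⁻¹ * ∑ j, (x j - y i j)^2) := by
    intro x i; simp [hq]
  have hS0 : ∀ (x : Fin n → ℝ) i, 0 ≤ ∑ j, (x j - y i j)^2 :=
    fun x i => Finset.sum_nonneg fun j _ => sq_nonneg _
  -- distance vs sum of squares
  have hdistS : ∀ (x : Fin n → ℝ) i (r : ℝ), 0 ≤ r →
      (∑ j, (x j - y i j)^2) ≤ r^2 → dist x (y i) ≤ r := by
    intro x i r hr hsum
    refine (dist_pi_le_iff hr).2 fun j => ?_
    rw [Real.dist_eq]
    have h1 : (x j - y i j)^2 ≤ r^2 :=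
      le_trans (Finset.single_le_sum (fun j _ => sq_nonneg (x j - y i j))
        (Finset.mem_univ j)) hsum
    calc |x j - y i j| = Real.sqrt ((x j - y i j)^2) := (Real.sqrt_sq_eq_abs _).symm
      _ ≤ Real.sqrt (r^2) := Real.sqrt_le_sqrt h1
      _ = r := Real.sqrt_sq hr
  have hSdist : ∀ (x : Fin n → ℝ) i, dist x (y i) < η →
      (∑ j, (x j - y i j)^2) ≤ (n : ℝ) * η^2 := by
    intro x i hd
    calc (∑ j, (x j - y i j)^2) ≤ ∑ _j : Fin n, η^2 := by
          refine Finset.sum_le_sum fun j _ => ?_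
          have h1 : |x j - y i j| ≤ η := by
            rw [← Real.dist_eq]
            exact le_trans (dist_le_pi_dist x (y i) j) hd.le
          calc (x j - y i j)^2 = |x j - y i j|^2 := (sq_abs _).symm
            _ ≤ η^2 := pow_le_pow_left₀ (abs_nonneg _) h1 2
      _ = (n : ℝ) * η^2 := by
          rw [Finset.sum_const, Finset.card_univ, Fintype.card_fin, nsmul_eq_mul]
  -- tents lie below f
  have tle : ∀ (x : Fin n → ℝ) (i : Fin m), eval x (q i.succ) ≤ f x := by
    intro x i
    rw [eS]
    rcases le_or_gt (δ^2) (∑ j, (x j - y i j)^2) with h | h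
    · have h1 : 1 - (δ^2)⁻¹ * ∑ j, (x j - y i j)^2 ≤ 0 := by
        have h2 : (1:ℝ) ≤ (δ^2)⁻¹ * ∑ j, (x j - y i j)^2 := by
          rw [inv_mul_eq_div, le_div_iff₀ (by positivity)]
          linarith
        linarith
      have := mul_nonpos_of_nonneg_of_nonpos (hc0 i) h1
      linarith [hfnn x]
    · have hd : dist x (y i) < δ := by
        have h1 : dist x (y i) ≤ Real.sqrt (∑ j, (x j - y i j)^2) := by
          refine hdistS x i _ (Real.sqrt_nonneg _) ?_
          rw [Real.sq_sqrt (hS0 x i)]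
        have h2 : Real.sqrt (∑ j, (x j - y i j)^2) < δ := by
          calc Real.sqrt (∑ j, (x j - y i j)^2) < Real.sqrt (δ^2) :=
                Real.sqrt_lt_sqrt (hS0 x i) h
            _ = δ := Real.sqrt_sq hδ.le
        linarith
      have h3 := hδf hd
      rw [Real.dist_eq] at h3
      have h4 := abs_lt.mp h3
      have h5 : c i ≤ f x := max_le (hfnn x) (by linarith [h4.1])
      have h6 : c i * (1 - (δ^2)⁻¹ * ∑ j, (x j - y i j)^2) ≤ c i := by
        have : (0:ℝ) ≤ (δ^2)⁻¹ * ∑ j, (x j - y i j)^2 :=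
          mul_nonneg (by positivity) (hS0 x i)
        nlinarith [hc0 i]
      linarith
  -- near net points the tent is large
  have key : ∀ (x : Fin n → ℝ) (i : Fin m), dist x (y i) < η →
      c i - ε ≤ eval x (q i.succ) := by
    intro x i hd
    rw [eS]
    have hS := hSdist x i hd
    have hr : (δ^2)⁻¹ * (∑ j, (x j - y i j)^2) ≤ (n : ℝ) * ε / ((n : ℝ) * C' + 1) := by
      have h1 : (δ^2)⁻¹ * (∑ j, (x j - y i j)^2) ≤ (δ^2)⁻¹ * ((n : ℝ) * η^2) :=
        mul_le_mul_of_nonneg_left hS (by positivity)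
      have h2 : (δ^2)⁻¹ * ((n : ℝ) * η^2) ≤
          (δ^2)⁻¹ * ((n : ℝ) * (δ ^ 2 * (ε / ((n : ℝ) * C' + 1)))) := by
        have := mul_le_mul_of_nonneg_left hη2 (show (0:ℝ) ≤ (n:ℝ) from Nat.cast_nonneg n)
        exact mul_le_mul_of_nonneg_left this (by positivity)
      have h3 : (δ^2)⁻¹ * ((n : ℝ) * (δ ^ 2 * (ε / ((n : ℝ) * C' + 1)))) =
          (n : ℝ) * ε / ((n : ℝ) * C' + 1) := by
        field_simp
      linarith
    have hr0 : 0 ≤ (δ^2)⁻¹ * (∑ j, (x j - y i j)^2) :=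
      mul_nonneg (by positivity) (hS0 x i)
    have h4 : c i * ((δ^2)⁻¹ * (∑ j, (x j - y i j)^2)) ≤
        C' * ((n : ℝ) * ε / ((n : ℝ) * C' + 1)) :=
      mul_le_mul (hcC' i) hr hr0 hC'0
    have h5 : C' * ((n : ℝ) * ε / ((n : ℝ) * C' + 1)) ≤ ε := by
      rw [mul_div_assoc', div_le_iff₀ hpos]
      have : 0 ≤ (n : ℝ) := Nat.cast_nonneg n
      nlinarith
    nlinarith [hc0 i]
  have gnn : ∀ x, 0 ≤ g x := by
    intro x
    have := Finset.le_sup' (fun i => eval x (q i)) (Finset.mem_univ (0 : Fin (m+1)))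
    rw [e0] at this
    exact this
  have gle : ∀ x, g x ≤ f x := by
    intro x
    refine Finset.sup'_le _ _ fun i _ => ?_
    induction i using Fin.cases with
    | zero => rw [e0]; exact hfnn x
    | succ i => exact tle x i
  refine ⟨g, ?_, ?_, gnn, ?_, gle, ?_⟩
  · exact Continuous.finset_sup'_apply _ fun i _ => MvPolynomial.continuous_eval (q i)
  · refine HasCompactSupport.intro' (K := ⋃ i, Metric.closedBall (y i) δ)
      (isCompact_iUnion fun i => isCompact_closedBall _ _)
      (isClosed_iUnion_of_finite fun i => Metric.isClosed_closedBall) ?_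
    intro x hx
    simp only [Set.mem_iUnion, Metric.mem_closedBall, not_exists, not_le] at hx
    refine le_antisymm (Finset.sup'_le _ _ fun i _ => ?_) (gnn x)
    induction i using Fin.cases with
    | zero => rw [e0]
    | succ i =>
        rw [eS]
        have hgt : δ^2 < ∑ j, (x j - y i j)^2 := by
          by_contra hcon
          push_neg at hcon
          exact absurd (hdistS x i δ hδ.le hcon) (not_le.mpr (hx i))
        have h1 : 1 - (δ^2)⁻¹ * ∑ j, (x j - y i j)^2 ≤ 0 := by
          have h2 : (1:ℝ) ≤ (δ^2)⁻¹ * ∑ j, (x j - y i j)^2 := by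
            rw [inv_mul_eq_div, le_div_iff₀ (by positivity)]
            linarith
          linarith
        exact mul_nonpos_of_nonneg_of_nonpos (hc0 i) h1
  · rw [hg]
    exact isSemialgebraicFun_sup' q
  · intro x
    by_cases hx : x ∈ tsupport f
    · obtain ⟨i, hi⟩ := net x hx
      have h1 := key x i hi
      have h2 : eval x (q i.succ) ≤ g x :=
        Finset.le_sup' (fun i => eval x (q i)) (Finset.mem_univ i.succ)
      have h3 : dist x (y i) < δ := lt_of_lt_of_le hi hηδ
      have h4 := hδf h3
      rw [Real.dist_eq] at h4
      have h5 := abs_lt.mp h4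
      have h6 : f (y i) - ε ≤ c i := le_max_right _ _
      linarith [h5.2]
    · have h0 : f x = 0 := image_eq_zero_of_notMem_tsupport hx
      have := gnn x
      linarith

/-- Any nonnegative continuous compactly supported `f : ℝⁿ → ℝ` is the uniform
limit of a sequence of nonnegative continuous compactly supported semialgebraic
functions lying below `f`. -/
theorem stmt12 (n : ℕ) (f : (Fin n → ℝ) → ℝ) (hf : Continuous f)
    (hfc : HasCompactSupport f) (hfnn : ∀ x, 0 ≤ f x) :
    ∃ fk : ℕ → (Fin n → ℝ) → ℝ,
      (∀ k, Continuous (fk k) ∧ HasCompactSupport (fk k) ∧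
        (∀ x, 0 ≤ fk k x) ∧ IsSemialgebraicFun (fk k) ∧ ∀ x, fk k x ≤ f x) ∧
      TendstoUniformly fk f Filter.atTop := by
  have H : ∀ k : ℕ, ∃ g : (Fin n → ℝ) → ℝ, Continuous g ∧ HasCompactSupport g ∧
      (∀ x, 0 ≤ g x) ∧ IsSemialgebraicFun g ∧ (∀ x, g x ≤ f x) ∧
      ∀ x, f x ≤ g x + 3 * (1 / (3 * ((k : ℝ) + 1))) :=
    fun k => approx_lemma n f hf hfc hfnn (by positivity)
  choose g hg1 hg2 hg3 hg4 hg5 hg6 using H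
  refine ⟨g, fun k => ⟨hg1 k, hg2 k, hg3 k, hg4 k, hg5 k⟩, ?_⟩
  rw [Metric.tendstoUniformly_iff]
  intro ε hε
  obtain ⟨k₀, hk₀⟩ := exists_nat_one_div_lt hε
  filter_upwards [Filter.eventually_ge_atTop k₀] with k hk x
  have hk1 : ((k : ℝ) + 1) ≠ 0 := by positivity
  have h3e : 3 * (1 / (3 * ((k : ℝ) + 1))) = 1 / ((k : ℝ) + 1) := by
    field_simp
  have h1 : f x - g k x ≤ 1 / ((k : ℝ) + 1) := by
    have := hg6 k x
    rw [h3e] at this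
    linarith
  have h2 : (1 : ℝ) / ((k : ℝ) + 1) ≤ 1 / ((k₀ : ℝ) + 1) := by
    apply one_div_le_one_div_of_le (by positivity)
    have : (k₀ : ℝ) ≤ (k : ℝ) := Nat.cast_le.mpr hk
    linarith
  rw [Real.dist_eq, abs_of_nonneg (sub_nonneg.2 (hg5 k x))]
  calc f x - g k x ≤ 1 / ((k : ℝ) + 1) := h1
    _ ≤ 1 / ((k₀ : ℝ) + 1) := h2
    _ < ε := hk₀
end
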